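/- Let K ⊆ X be a compact subset of a metric space X, Y a metric space, and f : X → Y continuous. Then f restricted to K admits a modulus of continuity which is bounded, continuous, concave, nondecreasing, and vanishing at 0; that is, there exists ω : [0,∞) → [0,∞) bounded, continuous, concave, nondecreasing with ω(0)=0 such that d(f(x), f(y)) ≤ ω(d(x,y)) for all x, y ∈ K. -/

import Mathlib

/-!
Let `M` be the diameter of `f '' K` and, for `ε > 0`, let `δ ε > 0` witness uniform continuity
of `f` on `K`. Then `ω` is the infimum of the constant `M` and of the lines
`t ↦ ε + (M / δ ε) * t`, each of which dominates `dist (f x) (f y)` as a function of `dist x y`.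
An infimum of nondecreasing affine functions is concave, nondecreasing and upper
semicontinuous; on `[0, ∞)` concavity gives continuity in the interior, and monotonicity together
with upper semicontinuity gives it at `0`.
-/

open Set

lemma concaveOn_ciInf {ι E : Type*} [Nonempty ι] [AddCommMonoid E] [Module ℝ E] {s : Set E}
    {f : ι → E → ℝ} (hf : ∀ i, ConcaveOn ℝ s (f i))
    (hbdd : ∀ x ∈ s, BddBelow (range fun i => f i x)) :
    ConcaveOn ℝ s fun x => ⨅ i, f i x := by
  refine ⟨(hf (Classical.arbitrary ι)).1, fun x hx y hy a b ha hb hab => le_ciInf fun i => ?_⟩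
  calc a • (⨅ i, f i x) + b • (⨅ i, f i y) ≤ a • f i x + b • f i y := by
        gcongr
        exacts [ciInf_le (hbdd x hx) i, ciInf_le (hbdd y hy) i]
    _ ≤ f i (a • x + b • y) := (hf i).2 hx hy ha hb hab

lemma MonotoneOn.lowerSemicontinuousWithinAt_Ici {α β : Type*} [TopologicalSpace α] [Preorder α]
    [Preorder β] {f : α → β} {a : α} (hf : MonotoneOn f (Ici a)) :
    LowerSemicontinuousWithinAt f (Ici a) a :=
  fun _ hy => eventually_nhdsWithin_of_forall fun _ hz => hy.trans_le (hf self_mem_Ici hz hz)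

section AffineInf

variable {ι : Type*} {a b : ι → ℝ}

lemma bddBelow_range_affine (ha : ∀ i, 0 ≤ a i) (hb : ∀ i, 0 ≤ b i) {t : ℝ} (ht : 0 ≤ t) :
    BddBelow (range fun i => a i + b i * t) :=
  ⟨0, by rintro _ ⟨i, rfl⟩; exact add_nonneg (ha i) (mul_nonneg (hb i) ht)⟩

lemma monotoneOn_iInf_affine (ha : ∀ i, 0 ≤ a i) (hb : ∀ i, 0 ≤ b i) :
    MonotoneOn (fun t => ⨅ i, a i + b i * t) (Ici 0) := fun s hs _ _ hst =>
  ciInf_mono (bddBelow_range_affine ha hb hs) fun i => by gcongr; exact hb i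

variable [Nonempty ι]

lemma iInf_affine_nonneg (ha : ∀ i, 0 ≤ a i) (hb : ∀ i, 0 ≤ b i) {t : ℝ} (ht : 0 ≤ t) :
    0 ≤ ⨅ i, a i + b i * t :=
  le_ciInf fun i => add_nonneg (ha i) (mul_nonneg (hb i) ht)

lemma concaveOn_iInf_affine (ha : ∀ i, 0 ≤ a i) (hb : ∀ i, 0 ≤ b i) :
    ConcaveOn ℝ (Ici 0) fun t => ⨅ i, a i + b i * t :=
  concaveOn_ciInf (fun i => (concaveOn_const (a i) (convex_Ici 0)).add
    ((concaveOn_id (convex_Ici 0)).smul (hb i))) fun _ ht => bddBelow_range_affine ha hb ht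

lemma continuousOn_iInf_affine (ha : ∀ i, 0 ≤ a i) (hb : ∀ i, 0 ≤ b i) :
    ContinuousOn (fun t => ⨅ i, a i + b i * t) (Ici 0) :=
  (concaveOn_iInf_affine ha hb).continuousOn_Ici <|
    continuousWithinAt_iff_lower_upperSemicontinuousWithinAt.mpr
      ⟨(monotoneOn_iInf_affine ha hb).lowerSemicontinuousWithinAt_Ici,
        upperSemicontinuousWithinAt_ciInf
          (eventually_nhdsWithin_of_forall fun _ ht => bddBelow_range_affine ha hb ht)
          fun _ => (continuous_const.add (continuous_const.mul continuous_id))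
            |>.upperSemicontinuous.upperSemicontinuousWithinAt _ _⟩

end AffineInf

lemma le_add_div_mul_of_le {d M ε δ t : ℝ} (hM : 0 ≤ M) (hε : 0 ≤ ε) (hδ : 0 < δ) (ht : 0 ≤ t)
    (hdM : d ≤ M) (hdε : t < δ → d ≤ ε) : d ≤ ε + M / δ * t := by
  rcases lt_or_ge t δ with htδ | hδt
  · exact (hdε htδ).trans (le_add_of_nonneg_right (by positivity))
  · calc d ≤ M := hdM
      _ ≤ M / δ * t := by
        rw [div_mul_eq_mul_div, le_div_iff₀ hδ]
        exact mul_le_mul_of_nonneg_left hδt hM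
      _ ≤ ε + M / δ * t := le_add_of_nonneg_left hε

theorem exists_concave_modulus_of_uniformContinuousOn {X Y : Type*} [PseudoMetricSpace X]
    [PseudoMetricSpace Y] {f : X → Y} {s : Set X} (hf : UniformContinuousOn f s)
    (hfs : Bornology.IsBounded (f '' s)) :
    ∃ ω : ℝ → ℝ,
      (∀ t, 0 ≤ t → 0 ≤ ω t) ∧
      (∃ C : ℝ, ∀ t, 0 ≤ t → ω t ≤ C) ∧
      ContinuousOn ω (Ici 0) ∧
      ConcaveOn ℝ (Ici 0) ω ∧
      MonotoneOn ω (Ici 0) ∧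
      ω 0 = 0 ∧
      ∀ x ∈ s, ∀ y ∈ s, dist (f x) (f y) ≤ ω (dist x y) := by
  set M := Metric.diam (f '' s)
  have hM : 0 ≤ M := Metric.diam_nonneg
  have hdist_le_M : ∀ x ∈ s, ∀ y ∈ s, dist (f x) (f y) ≤ M := fun x hx y hy =>
    Metric.dist_le_diam_of_mem hfs (mem_image_of_mem f hx) (mem_image_of_mem f hy)
  choose δ hδ hδf using Metric.uniformContinuousOn_iff.mp hf
  let a : Option {ε : ℝ // 0 < ε} → ℝ := fun i => i.elim M (·.1)
  let b : Option {ε : ℝ // 0 < ε} → ℝ := fun i => i.elim 0 fun ε => M / δ ε ε.2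
  have ha : ∀ i, 0 ≤ a i
    | none => hM
    | some ε => ε.2.le
  have hb : ∀ i, 0 ≤ b i
    | none => le_rfl
    | some ε => div_nonneg hM (hδ ε ε.2).le
  have hle : ∀ i {t}, 0 ≤ t → ⨅ j, a j + b j * t ≤ a i + b i * t := fun i _ ht =>
    ciInf_le (bddBelow_range_affine ha hb ht) i
  refine ⟨fun t => ⨅ i, a i + b i * t, fun t ht => iInf_affine_nonneg ha hb ht,
    ⟨M, fun t ht => by simpa [a, b] using hle none ht⟩, continuousOn_iInf_affine ha hb,
    concaveOn_iInf_affine ha hb, monotoneOn_iInf_affine ha hb, ?_, ?_⟩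
  · refine le_antisymm (le_of_forall_pos_le_add fun ε hε => ?_) (iInf_affine_nonneg ha hb le_rfl)
    simpa [a, b] using hle (some ⟨ε, hε⟩) le_rfl
  · intro x hx y hy
    refine le_ciInf ?_
    rintro (_ | ⟨ε, hε⟩)
    · simpa [a, b] using hdist_le_M x hx y hy
    · exact le_add_div_mul_of_le hM hε.le (hδ ε hε) dist_nonneg (hdist_le_M x hx y hy)
        fun hxy => (hδf ε hε x hx y hy hxy).le

/-- A continuous function on a metric space admits, on every compact
subset, a bounded, continuous, concave, nondecreasing modulus of continuity
vanishing at `0`. -/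
theorem exists_concave_modulus_of_continuity
    {X Y : Type*} [MetricSpace X] [MetricSpace Y]
    (K : Set X) (hK : IsCompact K)
    (f : X → Y) (hf : Continuous f) :
    ∃ ω : ℝ → ℝ,
      (∀ t, 0 ≤ t → 0 ≤ ω t) ∧
      (∃ C : ℝ, ∀ t, 0 ≤ t → ω t ≤ C) ∧
      ContinuousOn ω (Set.Ici (0 : ℝ)) ∧
      ConcaveOn ℝ (Set.Ici (0 : ℝ)) ω ∧
      MonotoneOn ω (Set.Ici (0 : ℝ)) ∧
      ω 0 = 0 ∧
      ∀ x ∈ K, ∀ y ∈ K, dist (f x) (f y) ≤ ω (dist x y) :=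
  exists_concave_modulus_of_uniformContinuousOn
    (hK.uniformContinuousOn_of_continuous hf.continuousOn) (hK.image hf).isBounded
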